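/- Let f : ℝ → Mₙ(ℂ) be continuous (entrywise) with f(k) unitary for every k. Fix k₀ ∈ ℝ and θ₀ ∈ (0,π) such that f(k₀) has no eigenvalue of the form e^{iφ} with 0 < |φ| ≤ θ₀, and let m be the algebraic multiplicity of 1 as an eigenvalue of f(k₀). Then there exists δ > 0 such that for every k with |k − k₀| < δ: f(k) has no eigenvalue equal to e^{iθ₀} or e^{−iθ₀}, and the number of eigenvalues of f(k), counted with algebraic multiplicity, of the form e^{iφ} with |φ| < θ₀ equals m. -/

import Mathlib

open Matrix Polynomial
open scoped Classical

open Filter Topology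

/-!
Roots of monic polynomials depend continuously on the coefficients. Let `p(k)` be the
characteristic polynomial of `f(k)` and enumerate its `n` roots. Along any sequence `kⱼ → k₀`
these enumerations stay on the unit circle, so a subsequence converges, and the limit enumerates
the roots of `p(k₀)` because `p(kⱼ)(w) = ∏ᵢ (w - zᵢ(kⱼ))` converges to `p(k₀)(w)` for every `w`.
Hence if no root of `p(k₀)` lies on the line `Re z = cos θ₀`, then for `k` near `k₀` no root of
`p(k)` does and the number of roots with `Re z > cos θ₀` is unchanged. On the unit circle that
half-plane is the arc `{e^{iφ} : |φ| < θ₀}`, and by the gap hypothesis the only root of `p(k₀)`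
on it is `1`.
-/

lemma Multiset.exists_fin_map_univ_eq {α : Type*} {n : ℕ} (s : Multiset α)
    (hs : Multiset.card s = n) : ∃ g : Fin n → α, Finset.univ.val.map g = s := by
  obtain rfl : s.toList.length = n := by simpa using hs
  exact ⟨s.toList.get, by rw [Fin.univ_val_map, List.ofFn_get, Multiset.coe_toList]⟩

theorem eventually_countP_map_eq {ι α : Type*} [TopologicalSpace α] {l : Filter ι} {n : ℕ}
    {g : ι → Fin n → α} {z : Fin n → α} {U V : Set α} [DecidablePred (· ∈ U)]
    (hU : IsOpen U) (hV : IsOpen V) (hUV : Disjoint U V) (hz : ∀ j, z j ∈ U ∪ V)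
    (hgz : Tendsto g l (𝓝 z)) :
    ∀ᶠ i in l, (∀ j, g i j ∈ U ∪ V) ∧
      (Finset.univ.val.map (g i)).countP (· ∈ U) = (Finset.univ.val.map z).countP (· ∈ U) := by
  have hsame : ∀ᶠ i in l, ∀ j, (g i j ∈ U ↔ z j ∈ U) ∧ g i j ∈ U ∪ V := by
    refine eventually_all.2 fun j => ?_
    have hj : Tendsto (fun i => g i j) l (𝓝 (z j)) := (continuous_apply j).tendsto z |>.comp hgz
    rcases hz j with hzU | hzV
    · filter_upwards [hj.eventually_mem (hU.mem_nhds hzU)] with i hi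
      exact ⟨iff_of_true hi hzU, Or.inl hi⟩
    · filter_upwards [hj.eventually_mem (hV.mem_nhds hzV)] with i hi
      exact ⟨iff_of_false (hUV.notMem_of_mem_right hi) (hUV.notMem_of_mem_right hzV), Or.inr hi⟩
  filter_upwards [hsame] with i hi
  refine ⟨fun j => (hi j).2, ?_⟩
  rw [Multiset.countP_map, Multiset.countP_map]
  congr 1
  exact Multiset.filter_congr fun j _ => (hi j).1

namespace Polynomial

variable {K : Type*} [Field K] [IsAlgClosed K] [TopologicalSpace K] [IsTopologicalRing K]
  [T2Space K]

theorem roots_eq_map_of_tendsto_enum {ι : Type*} {l : Filter ι} [l.NeBot]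
    {p : ι → K[X]} {q : K[X]} {n : ℕ} {g : ι → Fin n → K} {z : Fin n → K}
    (hp : ∀ i, (p i).Monic) (hg : ∀ i, Finset.univ.val.map (g i) = (p i).roots)
    (hgz : Tendsto g l (𝓝 z)) (hpq : ∀ w, Tendsto (fun i => (p i).eval w) l (𝓝 (q.eval w))) :
    q.roots = Finset.univ.val.map z := by
  have heval : ∀ w, q.eval w = ∏ j, (w - z j) := fun w => by
    refine tendsto_nhds_unique (hpq w) ?_
    have hprod : ∀ i, (p i).eval w = ∏ j, (w - g i j) := fun i => by
      rw [(IsAlgClosed.splits _).eval_eq_prod_roots_of_monic (hp i), ← hg i, Multiset.map_map]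
      rfl
    simp_rw [hprod]
    exact tendsto_finsetProd _ fun j _ =>
      tendsto_const_nhds.sub ((continuous_apply j).tendsto z |>.comp hgz)
  have hq : q = ∏ j, (X - C (z j)) := Polynomial.funext fun w => by
    simp [heval, eval_prod]
  have hroots := roots_multiset_prod_X_sub_C (Finset.univ.val.map z)
  rw [Multiset.map_map, ← Finset.prod_eq_multiset_prod] at hroots
  rw [hq]
  exact hroots

theorem eventually_countP_roots_eq [FirstCountableTopology K] {ι : Type*} {l : Filter ι}
    [l.IsCountablyGenerated] {p : ι → K[X]} {q : K[X]} {n : ℕ} {S U V : Set K}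
    [DecidablePred (· ∈ U)] (hp : ∀ i, (p i).Monic) (hdeg : ∀ i, (p i).natDegree = n)
    (hS : IsCompact S) (hpS : ∀ i, ∀ z ∈ (p i).roots, z ∈ S)
    (hpq : ∀ w, Tendsto (fun i => (p i).eval w) l (𝓝 (q.eval w)))
    (hU : IsOpen U) (hV : IsOpen V) (hUV : Disjoint U V) (hq : ∀ z ∈ q.roots, z ∈ U ∪ V) :
    ∀ᶠ i in l, (∀ z ∈ (p i).roots, z ∈ U ∪ V) ∧
      (p i).roots.countP (· ∈ U) = q.roots.countP (· ∈ U) := by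
  by_contra hbad
  obtain ⟨x, hx, hxbad⟩ := frequently_iff_seq_forall.1 (not_eventually.1 hbad)
  have hcard : ∀ j, Multiset.card (p (x j)).roots = n := fun j => by
    rw [← hdeg (x j), ← splits_iff_card_roots]
    exact IsAlgClosed.splits _
  choose g hg using fun j => (p (x j)).roots.exists_fin_map_univ_eq (hcard j)
  have hgS : ∀ j, g j ∈ Set.univ.pi fun _ => S := fun j i _ =>
    hpS _ _ (hg j ▸ Multiset.mem_map_of_mem _ (Finset.mem_univ_val i))
  obtain ⟨z, -, φ, hφ, hgz⟩ := (isCompact_univ_pi fun _ => hS).tendsto_subseq hgS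
  have hqz : q.roots = Finset.univ.val.map z :=
    roots_eq_map_of_tendsto_enum (fun _ => hp _) (fun j => hg (φ j)) hgz
      fun w => (hpq w).comp (hx.comp hφ.tendsto_atTop)
  have hzUV : ∀ j, z j ∈ U ∪ V := fun j =>
    hq _ (hqz ▸ Multiset.mem_map_of_mem _ (Finset.mem_univ_val j))
  obtain ⟨j, hjUV, hjU⟩ := (eventually_countP_map_eq hU hV hUV hzUV hgz).exists
  refine hxbad (φ j) ⟨fun w hw => ?_, ?_⟩
  · rw [← hg (φ j)] at hw
    obtain ⟨i, -, rfl⟩ := Multiset.mem_map.1 hw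
    exact hjUV i
  · rw [← hg (φ j), hqz]
    exact hjU

end Polynomial

namespace Matrix

open scoped Matrix.Norms.L2Operator in
lemma norm_eq_one_of_isRoot_charpoly {n : Type*} [Fintype n] [DecidableEq n]
    {M : Matrix n n ℂ} (hM : M ∈ unitaryGroup n ℂ) {z : ℂ} (hz : M.charpoly.IsRoot z) :
    ‖z‖ = 1 := by
  simpa using spectrum.subset_circle_of_unitary hM (mem_spectrum_of_isRoot_charpoly hz)

lemma continuous_eval_charpoly {X R n : Type*} [TopologicalSpace X] [CommRing R]
    [TopologicalSpace R] [IsTopologicalRing R] [Fintype n] [DecidableEq n]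
    {f : X → Matrix n n R} (hf : Continuous f) (w : R) :
    Continuous fun x => (f x).charpoly.eval w := by
  simp only [eval_charpoly]
  fun_prop

theorem eventually_countP_roots_charpoly_eq {X n : Type*} [TopologicalSpace X]
    [FirstCountableTopology X] [Fintype n] [DecidableEq n] {f : X → Matrix n n ℂ}
    (hf : Continuous f) (hunit : ∀ x, f x ∈ unitaryGroup n ℂ) {x₀ : X} {U V : Set ℂ}
    [DecidablePred (· ∈ U)] (hU : IsOpen U) (hV : IsOpen V) (hUV : Disjoint U V)
    (hx₀ : ∀ z ∈ (f x₀).charpoly.roots, z ∈ U ∪ V) :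
    ∀ᶠ x in 𝓝 x₀, (∀ z ∈ (f x).charpoly.roots, z ∈ U ∪ V) ∧
      (f x).charpoly.roots.countP (· ∈ U) = (f x₀).charpoly.roots.countP (· ∈ U) :=
  Polynomial.eventually_countP_roots_eq (fun x => charpoly_monic (f x))
    (fun x => charpoly_natDegree_eq_dim (f x)) (isCompact_sphere 0 1)
    (fun x _ hz => mem_sphere_zero_iff_norm.2 <|
      norm_eq_one_of_isRoot_charpoly (hunit x) (isRoot_of_mem_roots hz))
    (fun w => (continuous_eval_charpoly hf w).tendsto x₀) hU hV hUV hx₀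

end Matrix

namespace Complex

lemma re_exp_I_mul (φ : ℝ) : (exp (I * φ)).re = Real.cos φ := by
  rw [mul_comm, exp_ofReal_mul_I_re]

lemma exp_I_mul_arg {z : ℂ} (hz : ‖z‖ = 1) : exp (I * z.arg) = z := by
  simpa [hz, mul_comm] using norm_mul_exp_arg_mul_I z

lemma cos_arg_of_norm_eq_one {z : ℂ} (hz : ‖z‖ = 1) : Real.cos z.arg = z.re := by
  rw [cos_arg (norm_ne_zero_iff.1 (hz ▸ one_ne_zero)), hz, div_one]

lemma cos_lt_re_iff_exists_exp {θ : ℝ} (hθ₀ : 0 ≤ θ) (hθ : θ ≤ Real.pi) {z : ℂ}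
    (hz : ‖z‖ = 1) : Real.cos θ < z.re ↔ ∃ φ : ℝ, |φ| < θ ∧ z = exp (I * φ) := by
  have hθmem : θ ∈ Set.Icc 0 Real.pi := ⟨hθ₀, hθ⟩
  constructor
  · intro hlt
    refine ⟨z.arg, ?_, (exp_I_mul_arg hz).symm⟩
    rw [← cos_arg_of_norm_eq_one hz, ← Real.cos_abs z.arg] at hlt
    exact (Real.strictAntiOn_cos.lt_iff_gt hθmem ⟨abs_nonneg _, abs_arg_le_pi z⟩).1 hlt
  · rintro ⟨φ, hφ, rfl⟩
    rw [re_exp_I_mul, ← Real.cos_abs φ]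
    exact Real.strictAntiOn_cos ⟨abs_nonneg _, hφ.le.trans hθ⟩ hθmem hφ

lemma exists_exp_of_cos_le_re {θ : ℝ} (hθ₀ : 0 ≤ θ) (hθ : θ ≤ Real.pi) {z : ℂ}
    (hz : ‖z‖ = 1) (hle : Real.cos θ ≤ z.re) : ∃ φ : ℝ, |φ| ≤ θ ∧ z = exp (I * φ) := by
  refine ⟨z.arg, ?_, (exp_I_mul_arg hz).symm⟩
  rw [← cos_arg_of_norm_eq_one hz, ← Real.cos_abs z.arg] at hle
  exact (Real.strictAntiOn_cos.le_iff_ge ⟨hθ₀, hθ⟩ ⟨abs_nonneg _, abs_arg_le_pi z⟩).1 hle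

lemma re_lt_cos_of_forall_ne_exp {θ : ℝ} (hθ₀ : 0 ≤ θ) (hθ : θ ≤ Real.pi) {z : ℂ}
    (hz : ‖z‖ = 1) (h1 : z ≠ 1) (hgap : ∀ φ : ℝ, 0 < |φ| → |φ| ≤ θ → z ≠ exp (I * φ)) :
    z.re < Real.cos θ := by
  by_contra! hle
  obtain ⟨φ, hφ, rfl⟩ := exists_exp_of_cos_le_re hθ₀ hθ hz hle
  have hφ0 : φ ≠ 0 := by rintro rfl; simp at h1
  exact hgap φ (abs_pos.2 hφ0) hφ rfl

end Complex

/-- Continuity of the local eigenvalue count: if `f` is a continuous unitary-valued family and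
`f(k₀)` has no eigenvalue `e^{iφ}` with `0 < |φ| ≤ θ₀`, where `m` is the algebraic multiplicity
of `1` as an eigenvalue of `f(k₀)`, then for all `k` close to `k₀` the matrix `f(k)` has no
eigenvalue `e^{±iθ₀}` and has exactly `m` eigenvalues (with algebraic multiplicity) of the form
`e^{iφ}` with `|φ| < θ₀`. -/
theorem eigCount_near {n : ℕ} (f : ℝ → Matrix (Fin n) (Fin n) ℂ)
    (hcont : ∀ i j : Fin n, Continuous fun k => f k i j)
    (hunit : ∀ k : ℝ, f k ∈ Matrix.unitaryGroup (Fin n) ℂ)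
    (k₀ θ₀ : ℝ) (hθ₀ : 0 < θ₀ ∧ θ₀ < Real.pi)
    (hgap : ∀ φ : ℝ, 0 < |φ| → |φ| ≤ θ₀ →
      ¬ (f k₀).charpoly.IsRoot (Complex.exp (Complex.I * φ)))
    (m : ℕ) (hm : m = (f k₀).charpoly.rootMultiplicity 1) :
    ∃ δ : ℝ, 0 < δ ∧ ∀ k : ℝ, |k - k₀| < δ →
      (¬ (f k).charpoly.IsRoot (Complex.exp (Complex.I * θ₀)) ∧
        ¬ (f k).charpoly.IsRoot (Complex.exp (-(Complex.I * θ₀)))) ∧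
      Multiset.countP
          (fun z => ∃ φ : ℝ, |φ| < θ₀ ∧ z = Complex.exp (Complex.I * φ))
          (f k).charpoly.roots = m := by
  obtain ⟨hθpos, hθpi⟩ := hθ₀
  set c := Real.cos θ₀
  have hcircle : ∀ k, ∀ z ∈ (f k).charpoly.roots, ‖z‖ = 1 := fun k _ hz =>
    norm_eq_one_of_isRoot_charpoly (hunit k) (isRoot_of_mem_roots hz)
  have harc : ∀ k, ∀ z ∈ (f k).charpoly.roots,
      c < z.re ↔ ∃ φ : ℝ, |φ| < θ₀ ∧ z = Complex.exp (Complex.I * φ) := fun k z hz =>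
    Complex.cos_lt_re_iff_exists_exp hθpos.le hθpi.le (hcircle k z hz)
  have hroots₀ : ∀ z ∈ (f k₀).charpoly.roots, (c < z.re ↔ z = 1) ∧ (c < z.re ∨ z.re < c) := by
    intro z hz
    rcases eq_or_ne z 1 with rfl | h1
    · have h1U : c < (1 : ℂ).re := (harc k₀ 1 hz).2 ⟨0, by simpa using hθpos, by simp⟩
      exact ⟨iff_of_true h1U rfl, Or.inl h1U⟩
    have hzV : z.re < c := Complex.re_lt_cos_of_forall_ne_exp hθpos.le hθpi.le (hcircle k₀ z hz)
      h1 fun φ hφ hφθ hzφ => hgap φ hφ hφθ (hzφ ▸ isRoot_of_mem_roots hz)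
    exact ⟨iff_of_false hzV.not_gt h1, Or.inr hzV⟩
  obtain ⟨δ, hδ, hball⟩ := Metric.eventually_nhds_iff.1 <|
    eventually_countP_roots_charpoly_eq (continuous_matrix hcont) hunit
      (isOpen_lt continuous_const Complex.continuous_re)
      (isOpen_lt Complex.continuous_re continuous_const)
      (Set.disjoint_left.2 fun z (hU : c < z.re) (hV : z.re < c) => lt_asymm hU hV)
      fun z hz => (hroots₀ z hz).2
  refine ⟨δ, hδ, fun k hk => ?_⟩
  obtain ⟨hUV, hcount⟩ := hball (by rwa [Real.dist_eq])
  have hboundary : ∀ φ : ℝ, Real.cos φ = c →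
      ¬ (f k).charpoly.IsRoot (Complex.exp (Complex.I * φ)) := fun φ hφ hroot => by
    have hre : (Complex.exp (Complex.I * φ)).re = c := by rw [Complex.re_exp_I_mul, hφ]
    rcases hUV _ (mem_roots'.2 ⟨(charpoly_monic _).ne_zero, hroot⟩) with h | h
    exacts [(h : c < _).ne' hre, (h : _ < c).ne hre]
  refine ⟨⟨hboundary θ₀ rfl, by simpa using hboundary (-θ₀) (Real.cos_neg θ₀)⟩, ?_⟩
  calc _ = (f k).charpoly.roots.countP (fun z => c < z.re) :=
        Multiset.countP_congr rfl fun z hz => propext (harc k z hz).symm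
    _ = (f k₀).charpoly.roots.countP (fun z => c < z.re) := hcount
    _ = (f k₀).charpoly.roots.count 1 :=
        Multiset.countP_congr rfl fun z hz => propext ((hroots₀ z hz).1.trans eq_comm)
    _ = m := by rw [count_roots, hm]
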